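/- Fix an integer n ≥ 2 and let A_2 = (n/2)(H − E_1) + (n − 3/2)F ∈ L ⊗ ℚ. Then ⟨A_2, F⟩ = n > 0, ⟨A_2, x⟩ > 0 for every x ∈ 𝓔, and ⟨A_2, A_2⟩ = 2n² − 3n > 0. (These inequalities show A_2 is ample on X, since the cone of curves of X is spanned by F and the (−1)-curves.) -/

import Mathlib

/-- The Picard lattice `L = ℤ^10` of a rational elliptic surface,
with basis `H, E_1, …, E_9` (index `0` is `H`, index `i+1` is `E_{i+1}`). -/
abbrev L : Type := Fin 10 → ℤ

/-- The hyperplane class `H`. -/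
def Hcl : L := fun j => if j = 0 then 1 else 0

/-- The exceptional classes `E_1, …, E_9` (indexed by `Fin 9`). -/
def Ecl (i : Fin 9) : L := fun j => if j = i.succ then 1 else 0

/-- The intersection form: `⟨H,H⟩ = 1`, `⟨E_i,E_i⟩ = -1`, with `H, E_1, …, E_9`
pairwise orthogonal. -/
def form (x y : L) : ℤ := x 0 * y 0 - ∑ i : Fin 9, x i.succ * y i.succ

/-- The fiber class `F = 3H - E_1 - ⋯ - E_9 = -K_X`. -/
def Fcl : L := (3 : ℤ) • Hcl - ∑ i : Fin 9, Ecl i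

/-- The real Néron–Severi space `L ⊗ ℝ = ℝ^10`. -/
abbrev LR : Type := Fin 10 → ℝ

/-- The natural inclusion `L → L ⊗ ℝ`. -/
def toR (x : L) : LR := fun j => (x j : ℝ)

/-- The intersection form extended to `L ⊗ ℝ`. -/
def formR (x y : LR) : ℝ := x 0 * y 0 - ∑ i : Fin 9, x i.succ * y i.succ

/-- The set `𝓔` of classes of `(-1)`-curves:
`x ∈ L` with `⟨x,x⟩ = -1` and `⟨x,F⟩ = 1`. -/
def negCurves : Set L := {x | form x x = -1 ∧ form x Fcl = 1}

/-- The nef cone `𝒩 ⊆ L ⊗ ℝ`: classes meeting `F` and every `(-1)`-curve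
nonnegatively. -/
def nefCone : Set LR :=
  {D | 0 ≤ formR D (toR Fcl) ∧ ∀ x ∈ negCurves, 0 ≤ formR D (toR x)}

/-!
Pairing with `A₂ = (n/2)(H - E₁) + (n - 3/2)F` gives `⟨A₂, x⟩ = (n/2)⟨H - E₁, x⟩ + (n - 3/2)⟨F, x⟩`,
and `⟨H - E₁, H - E₁⟩ = 0`, `⟨H - E₁, F⟩ = 2`, `⟨F, F⟩ = 0` give the two identities. Positivity
on `𝓔` reduces to `⟨H - E₁, x⟩ = a + b ≥ 0` for a `(-1)`-class `x = aH + bE₁ + ∑ cᵢEᵢ`: writing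
`s = ∑ cᵢ` and `q = ∑ cᵢ²` over the eight remaining indices, `⟨x,x⟩ = -1` and `⟨x,F⟩ = 1` express
`q` and `s` in `a, b`, and this is incompatible with `a + b < 0` under the two integer
constraints `s ≤ q` (as `c ≤ c²`) and `s² ≤ 8q` (Cauchy–Schwarz).
-/

theorem Int.sum_le_sum_sq {ι : Type*} (s : Finset ι) (c : ι → ℤ) :
    ∑ i ∈ s, c i ≤ ∑ i ∈ s, c i ^ 2 :=
  Finset.sum_le_sum fun i _ => Int.le_self_sq (c i)

theorem add_nonneg_of_sq_sub_sq_eq_neg_one {a b s q : ℤ} (hsq : s ≤ q) (hcs : s ^ 2 ≤ 8 * q)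
    (hself : a ^ 2 - b ^ 2 - q = -1) (hF : 3 * a + b + s = 1) : 0 ≤ a + b := by
  by_contra! h
  obtain rfl : q = a ^ 2 - b ^ 2 + 1 := by linarith
  obtain rfl : s = 1 - 3 * a - b := by linarith
  rcases (by omega : a + b = -1 ∨ a + b ≤ -2) with h1 | h2
  · nlinarith
  · -- now `s² - 8q = (a + 3b + 1)² - 8(a + b + 1) > 0`
    nlinarith [sq_nonneg (a + 3 * b + 1)]

theorem Fcl_zero : Fcl 0 = 3 := by decide

theorem Fcl_succ (i : Fin 9) : Fcl i.succ = -1 := by revert i; decide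

theorem form_comm (x y : L) : form x y = form y x := by
  simp only [form, mul_comm]

theorem form_Hcl (z : L) : form Hcl z = z 0 := by
  simp [form, Hcl]

theorem form_Ecl (i : Fin 9) (z : L) : form (Ecl i) z = -z i.succ := by
  simp [form, Ecl, (Fin.succ_ne_zero i).symm]

theorem form_Fcl (x : L) : form x Fcl = 3 * x 0 + ∑ i : Fin 9, x i.succ := by
  simp [form, Fcl_zero, Fcl_succ, mul_comm]

theorem form_Fcl_self : form Fcl Fcl = 0 := by decide

theorem form_eq_sub_sub_sum (x y : L) :
    form x y = x 0 * y 0 - x 1 * y 1 - ∑ j : Fin 8, x j.succ.succ * y j.succ.succ := by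
  rw [form, Fin.sum_univ_succ, Fin.succ_zero_eq_one]
  ring

theorem add_nonneg_of_mem_negCurves {x : L} (hx : x ∈ negCurves) : 0 ≤ x 0 + x 1 := by
  obtain ⟨hself, hF⟩ := hx
  set c : Fin 8 → ℤ := fun j => x j.succ.succ
  rw [form_eq_sub_sub_sum] at hself
  rw [form_Fcl, Fin.sum_univ_succ, Fin.succ_zero_eq_one] at hF
  have hcs : (∑ j, c j) ^ 2 ≤ 8 * ∑ j, c j ^ 2 := by
    simpa using sq_sum_le_card_mul_sum_sq (s := Finset.univ) (f := c)
  refine add_nonneg_of_sq_sub_sq_eq_neg_one (Int.sum_le_sum_sq _ c) hcs ?_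
    (by linear_combination hF)
  simpa only [sq] using hself

theorem formR_toR (x y : L) : formR (toR x) (toR y) = form x y := by
  simp [formR, form, toR]

theorem formR_comm (x y : LR) : formR x y = formR y x := by
  simp only [formR, mul_comm]

theorem formR_add_left (x y z : LR) : formR (x + y) z = formR x z + formR y z := by
  simp only [formR, Pi.add_apply, add_mul, Finset.sum_add_distrib]
  ring

theorem formR_sub_left (x y z : LR) : formR (x - y) z = formR x z - formR y z := by
  simp only [formR, Pi.sub_apply, sub_mul, Finset.sum_sub_distrib]
  ring

theorem formR_smul_left (c : ℝ) (x z : LR) : formR (c • x) z = c * formR x z := by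
  simp only [formR, Pi.smul_apply, smul_eq_mul, mul_assoc, ← Finset.mul_sum]
  ring

/-- `H - E₁`, the fibre of the conic bundle given by the lines through the first blown-up point. -/
def conicClass : LR := toR Hcl - toR (Ecl 0)

theorem formR_conicClass_toR (z : L) : formR conicClass (toR z) = z 0 + z 1 := by
  rw [conicClass, formR_sub_left, formR_toR, formR_toR, form_Hcl, form_Ecl,
    Fin.succ_zero_eq_one]
  push_cast
  ring

theorem formR_conicClass_self : formR conicClass conicClass = 0 := by
  rw [conicClass, formR_sub_left, formR_comm (toR Hcl), formR_comm (toR (Ecl 0)), ← conicClass,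
    formR_conicClass_toR, formR_conicClass_toR]
  simp [Hcl, Ecl]

theorem formR_conicClass_Fcl : formR conicClass (toR Fcl) = 2 := by
  rw [formR_conicClass_toR, Fcl_zero, ← Fin.succ_zero_eq_one, Fcl_succ]
  norm_num

noncomputable def ampleClass (n : ℝ) : LR := (n / 2) • conicClass + (n - 3 / 2) • toR Fcl

theorem formR_ampleClass_left (n : ℝ) (y : LR) :
    formR (ampleClass n) y = n / 2 * formR conicClass y + (n - 3 / 2) * formR (toR Fcl) y := by
  rw [ampleClass, formR_add_left, formR_smul_left, formR_smul_left]

theorem formR_ampleClass_Fcl (n : ℝ) : formR (ampleClass n) (toR Fcl) = n := by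
  rw [formR_ampleClass_left, formR_conicClass_Fcl, formR_toR, form_Fcl_self]
  ring

theorem formR_ampleClass_self (n : ℝ) :
    formR (ampleClass n) (ampleClass n) = 2 * n ^ 2 - 3 * n := by
  rw [formR_ampleClass_left, formR_comm _ (ampleClass n), formR_comm _ (ampleClass n),
    formR_ampleClass_Fcl, formR_ampleClass_left, formR_conicClass_self,
    formR_comm (toR Fcl), formR_conicClass_Fcl]
  ring

theorem formR_ampleClass_pos_of_mem_negCurves {n : ℝ} (hn : 3 / 2 < n) {x : L}
    (hx : x ∈ negCurves) : 0 < formR (ampleClass n) (toR x) := by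
  have hconic : (0 : ℝ) ≤ x 0 + x 1 := by exact_mod_cast add_nonneg_of_mem_negCurves hx
  have hF : formR (toR Fcl) (toR x) = 1 := by rw [formR_toR, form_comm, hx.2, Int.cast_one]
  rw [formR_ampleClass_left, formR_conicClass_toR, hF]
  nlinarith

/-- Fix `n ≥ 2` and let `A_2 = (n/2)(H - E_1) + (n - 3/2)F`.
Then `⟨A_2,F⟩ = n > 0`, `⟨A_2,x⟩ > 0` for every `(-1)`-class `x ∈ 𝓔`, and
`⟨A_2,A_2⟩ = 2n² - 3n > 0`. (These inequalities show `A_2` is ample on `X`,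
since the cone of curves of `X` is spanned by `F` and the `(-1)`-curves.) -/
theorem A2_is_ample (n : ℤ) (hn : 2 ≤ n) :
    formR (((n : ℝ) / 2) • (toR Hcl - toR (Ecl 0)) + ((n : ℝ) - 3 / 2) • toR Fcl)
        (toR Fcl) = (n : ℝ) ∧
    (0 : ℝ) < (n : ℝ) ∧
    (∀ x ∈ negCurves,
      0 < formR (((n : ℝ) / 2) • (toR Hcl - toR (Ecl 0)) + ((n : ℝ) - 3 / 2) • toR Fcl)
        (toR x)) ∧
    formR (((n : ℝ) / 2) • (toR Hcl - toR (Ecl 0)) + ((n : ℝ) - 3 / 2) • toR Fcl)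
        (((n : ℝ) / 2) • (toR Hcl - toR (Ecl 0)) + ((n : ℝ) - 3 / 2) • toR Fcl)
      = 2 * (n : ℝ) ^ 2 - 3 * (n : ℝ) ∧
    (0 : ℝ) < 2 * (n : ℝ) ^ 2 - 3 * (n : ℝ) := by
  have hnR : (2 : ℝ) ≤ n := by exact_mod_cast hn
  refine ⟨formR_ampleClass_Fcl n, by linarith,
    fun x hx => formR_ampleClass_pos_of_mem_negCurves (by linarith) hx,
    formR_ampleClass_self n, by nlinarith⟩
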